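/- arXiv:2403.17777 — 2 statements merged into one kernel-verified Lean document; each statement's English description precedes it below -/
import Mathlib

section
/- Let F be an absolutely continuous distribution supported on [0,∞) with inf of support equal to 0. Define the conditional distribution of the s-th order statistic given the cumulative event {ε₍ᵣ₎ ≤ y}: F₍ₛ|ᵣ₎(x; y) = F₍ᵣ,ₛ₎(y,x)/F₍ᵣ₎(y) for y > 0. Then for every x, lim_{y↓0} F₍ₛ|ᵣ₎(x; y) = F_{s−r:n−r}(x), the distribution function of the (s−r)-th order statistic of a sample of size n−r from F. -/
open MeasureTheory ProbabilityTheory Real Set Filter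

/-- The `j`-th (1-based) smallest order statistic of a finite family of reals. -/
noncomputable def orderStat {n : ℕ} (x : Fin n → ℝ) (j : ℕ) : ℝ :=
  ((Multiset.map x (Finset.univ.val : Multiset (Fin n))).sort (· ≤ ·)).getD (j - 1) 0

/-!
Write `N_t` for the number of observations `≤ t`, so that `ε₍ⱼ₎ ≤ t ↔ j ≤ N_t`. For `y ≤ x`
each observation falls independently into `(-∞, y]`, `(y, x]` or `(x, ∞)`, with probabilities
`p = F(y)`, `F(x) - p` and `1 - F(x)`; summing over the patterns of this trinomial experiment
gives `P(N_y ≥ r, N_x ≥ s) = p ^ r * G_s(p)` for a polynomial `G_s`. Since `N_y ≤ N_x`, the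
conditioning event is the case `s = r`, so the conditional c.d.f. is `G_s(p) / G_r(p)` once
`p > 0`. As `y ↓ 0`, `p → F(0) = 0`, and at `p = 0` only the patterns with exactly `r`
observations below `y` survive: `G_s(0) = C(n, r) * P(Bin(n - r, F(x)) ≥ s - r)` and
`G_r(0) = C(n, r)`. For `x ≤ 0` both sides vanish, because then `F(x) = 0`.
-/

open scoped Finset Topology

theorem List.SortedLE.getElem_le_iff_lt_countP {α : Type*} [LinearOrder α] {l : List α}
    (hl : l.SortedLE) {k : ℕ} (hk : k < l.length) (t : α) :
    l[k] ≤ t ↔ k < l.countP (· ≤ t) := by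
  constructor
  · intro hkt
    have htake : (l.take (k + 1)).countP (· ≤ t) = k + 1 := by
      rw [List.countP_eq_length.mpr, List.length_take, min_eq_left (by omega)]
      intro a ha
      obtain ⟨i, hi, rfl⟩ := List.getElem_of_mem ha
      simp only [List.getElem_take, decide_eq_true_eq]
      exact (hl.getElem_le_getElem_of_le (by simp at hi; omega)).trans hkt
    have := (List.take_sublist (k + 1) l).countP_le (p := (· ≤ t))
    omega
  · intro hlt
    by_contra! htk
    have hdrop : (l.drop k).countP (· ≤ t) = 0 := by
      rw [List.countP_eq_zero]
      intro a ha
      obtain ⟨i, hi, rfl⟩ := List.getElem_of_mem ha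
      simp only [List.getElem_drop, decide_eq_true_eq, not_le]
      exact htk.trans_le (hl.getElem_le_getElem_of_le (by omega))
    have htake := List.countP_le_length (p := (· ≤ t)) (l := l.take k)
    rw [← List.take_append_drop k l, List.countP_append, hdrop] at hlt
    simp only [List.length_take, le_inf_iff, add_zero] at htake hlt
    omega

theorem orderStat_le_iff {n : ℕ} (x : Fin n → ℝ) {j : ℕ} (hj : 1 ≤ j) (hjn : j ≤ n) (t : ℝ) :
    orderStat x j ≤ t ↔ j ≤ #{i | x i ≤ t} := by
  unfold orderStat
  set l := (Multiset.map x Finset.univ.val).sort (· ≤ ·)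
  have hlen : l.length = n := by simp [l]
  have hcount : l.countP (· ≤ t) = #{i | x i ≤ t} := by
    rw [← Multiset.coe_countP, Multiset.sort_eq, Multiset.countP_map]; rfl
  rw [List.getD_eq_getElem _ _ (by omega),
    (List.sortedLE_iff_pairwise.mpr (Multiset.pairwise_sort _ _)).getElem_le_iff_lt_countP, hcount]
  omega

noncomputable def binomialTail (m j : ℕ) (F : ℝ) : ℝ :=
  ∑ k ∈ Finset.Icc j m, (m.choose k : ℝ) * F ^ k * (1 - F) ^ (m - k)

lemma binomialTail_zero_eq_one (m : ℕ) (F : ℝ) : binomialTail m 0 F = 1 := by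
  have := add_pow F (1 - F) m
  rw [add_sub_cancel, one_pow] at this
  rw [binomialTail, ← Nat.range_succ_eq_Icc_zero]
  exact (Finset.sum_congr rfl fun k _ => by ring).trans this.symm

lemma binomialTail_eq_zero_of_pos (m : ℕ) {j : ℕ} (hj : 0 < j) : binomialTail m j 0 = 0 :=
  Finset.sum_eq_zero fun k hk => by
    rw [zero_pow (by grind), mul_zero, zero_mul]

lemma sum_powerset_card_ge_eq_binomialTail {α : Type*} (A : Finset α) (j : ℕ) (F : ℝ) :
    ∑ U ∈ A.powerset with j ≤ #U, F ^ #U * (1 - F) ^ (#A - #U) = binomialTail #A j F := by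
  rw [Finset.sum_filter,
    Finset.sum_powerset_apply_card fun k => if j ≤ k then F ^ k * (1 - F) ^ (#A - k) else 0,
    binomialTail, Nat.range_succ_eq_Icc_zero]
  have hIcc : {k ∈ Finset.Icc 0 #A | j ≤ k} = Finset.Icc j #A := by ext; simp; omega
  simp_rw [smul_ite, smul_zero]
  rw [← Finset.sum_filter, hIcc]
  exact Finset.sum_congr rfl fun k _ => by rw [nsmul_eq_mul, mul_assoc]

def countPatterns (n r s : ℕ) : Finset (Finset (Fin n) × Finset (Fin n)) :=
  {SU | Disjoint SU.1 SU.2 ∧ r ≤ #SU.1 ∧ s ≤ #SU.1 + #SU.2}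

/-- `p ^ r * countTailPoly n r s F p` is the probability that, among `n` independent draws, at
least `r` fall into a set `A` of mass `p` and at least `s` into a set `B ⊇ A` of mass `F`: a
pattern `(S, U)` lists the draws in `A` and those in `B \ A`. -/
noncomputable def countTailPoly (n r s : ℕ) (F p : ℝ) : ℝ :=
  ∑ SU ∈ countPatterns n r s, p ^ (#SU.1 - r) * (F - p) ^ #SU.2 * (1 - F) ^ #(SU.1 ∪ SU.2)ᶜ

lemma continuous_countTailPoly (n r s : ℕ) (F : ℝ) : Continuous (countTailPoly n r s F) := by
  unfold countTailPoly
  fun_prop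

lemma countTailPoly_zero (n r s : ℕ) (F : ℝ) :
    countTailPoly n r s F 0 = n.choose r * binomialTail (n - r) (s - r) F := by
  have hprod : ∀ SU, SU ∈ countPatterns n r s ↔
      SU.1 ∈ ({S | r ≤ #S} : Finset _) ∧ SU.2 ∈ {U ∈ SU.1ᶜ.powerset | s ≤ #SU.1 + #U} := by
    simp only [countPatterns, Finset.mem_filter, Finset.mem_univ, true_and, Finset.mem_powerset,
      Finset.subset_compl_iff_disjoint_left]
    tauto
  rw [countTailPoly, Finset.sum_finset_product _ {S | r ≤ #S}
    (fun S => {U ∈ Sᶜ.powerset | s ≤ #S + #U}) hprod]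
  have hsub : Finset.powersetCard r (Finset.univ : Finset (Fin n)) ⊆
      ({S | r ≤ #S} : Finset _) := fun S hS => by
    simp_all [Finset.mem_powersetCard]
  rw [← Finset.sum_subset hsub fun S hS hSr => Finset.sum_eq_zero fun U _ => ?_]
  · have hinner : ∀ S ∈ Finset.powersetCard r (Finset.univ : Finset (Fin n)),
        ∑ U ∈ Sᶜ.powerset with s ≤ #S + #U,
          (0 : ℝ) ^ (#S - r) * (F - 0) ^ #U * (1 - F) ^ #(S ∪ U)ᶜ =
        binomialTail (n - r) (s - r) F := by
      intro S hS
      obtain ⟨-, hSr⟩ := Finset.mem_powersetCard.mp hS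
      have hSc : #Sᶜ = n - r := by simp [Finset.card_compl, hSr]
      rw [← hSc, ← sum_powerset_card_ge_eq_binomialTail]
      refine Finset.sum_congr (Finset.filter_congr fun U _ => by omega) fun U hmem => ?_
      have hU : U ⊆ Sᶜ := Finset.mem_powerset.mp (Finset.mem_filter.mp hmem).1
      rw [Finset.compl_union, ← Finset.sdiff_eq_inter_compl, Finset.card_sdiff_of_subset hU,
        hSr, Nat.sub_self, pow_zero, one_mul, sub_zero]
    rw [Finset.sum_congr rfl hinner, Finset.sum_const, Finset.card_powersetCard,
      Finset.card_univ, Fintype.card_fin, nsmul_eq_mul]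
  · have hSr' : #S ≠ r := fun h => hSr (Finset.mem_powersetCard.mpr ⟨S.subset_univ, h⟩)
    have hrS := (Finset.mem_filter.mp hS).2
    rw [zero_pow (show #S - r ≠ 0 by omega), zero_mul, zero_mul]

section Pattern

variable {Ω : Type*} {n : ℕ} {ε : Fin n → Ω → ℝ}

noncomputable def lowSet (ε : Fin n → Ω → ℝ) (t : ℝ) (ω : Ω) : Finset (Fin n) := {i | ε i ω ≤ t}

def cell (y x : ℝ) (S U : Finset (Fin n)) (i : Fin n) : Set ℝ :=
  if i ∈ S then Iic y else if i ∈ U then Ioc y x else Ioi x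

lemma measurableSet_cell (y x : ℝ) (S U : Finset (Fin n)) (i : Fin n) :
    MeasurableSet (cell y x S U i) := by
  unfold cell; split_ifs <;> measurability

lemma lowSet_mono {y x : ℝ} (hyx : y ≤ x) (ω : Ω) : lowSet ε y ω ⊆ lowSet ε x ω := by
  intro i
  simp only [lowSet, Finset.mem_filter, Finset.mem_univ, true_and]
  exact fun h => h.trans hyx

lemma preimage_lowSet_pair_eq_iInter {y x : ℝ} (hyx : y ≤ x) {S U : Finset (Fin n)}
    (hSU : Disjoint S U) :
    (fun ω => (lowSet ε y ω, lowSet ε x ω \ lowSet ε y ω)) ⁻¹' {(S, U)} =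
      ⋂ i, ε i ⁻¹' cell y x S U i := by
  ext ω
  simp only [Set.mem_preimage, Set.mem_singleton_iff, Prod.mk.injEq, Finset.ext_iff, lowSet,
    Finset.mem_sdiff, Finset.mem_filter, Finset.mem_univ, true_and, Set.mem_iInter, cell]
  have := Finset.disjoint_left.mp hSU
  rw [← forall_and]
  exact forall_congr' fun i => by grind

variable [MeasurableSpace Ω] {μ : Measure Ω} {ν : Measure ℝ}

theorem ProbabilityTheory.iIndepFun.measure_iInter_preimage_eq_prod (hindep : iIndepFun ε μ)
    (hmeas : ∀ i, Measurable (ε i)) (hdist : ∀ i, μ.map (ε i) = ν) {B : Fin n → Set ℝ}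
    (hB : ∀ i, MeasurableSet (B i)) :
    μ (⋂ i, ε i ⁻¹' B i) = ∏ i, ν (B i) := by
  rw [show ⋂ i, ε i ⁻¹' B i = ⋂ i ∈ Finset.univ, ε i ⁻¹' B i by simp,
    hindep.measure_inter_preimage_eq_mul _ fun i _ => hB i]
  exact Finset.prod_congr rfl fun i _ => by rw [← hdist i, Measure.map_apply (hmeas i) (hB i)]

lemma prod_measure_cell (y x : ℝ) {S U : Finset (Fin n)} (hSU : Disjoint S U) :
    ∏ i, ν (cell y x S U i) = ν (Iic y) ^ #S * ν (Ioc y x) ^ #U * ν (Ioi x) ^ #(S ∪ U)ᶜ := by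
  rw [← Finset.prod_mul_prod_compl (S ∪ U), Finset.prod_union hSU]
  have hU : ∀ i ∈ U, i ∉ S := fun i hi hS => Finset.disjoint_left.mp hSU hS hi
  congr 2 <;> refine Finset.prod_eq_pow_card fun i hi => ?_
  · simp [cell, hi]
  · simp [cell, hi, hU i hi]
  · simp_all [cell]

theorem measure_card_lowSet_ge (hindep : iIndepFun ε μ) (hmeas : ∀ i, Measurable (ε i))
    (hdist : ∀ i, μ.map (ε i) = ν) {y x : ℝ} (hyx : y ≤ x) (r s : ℕ) :
    μ {ω | r ≤ #(lowSet ε y ω) ∧ s ≤ #(lowSet ε x ω)} =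
      ∑ SU ∈ countPatterns n r s,
        ν (Iic y) ^ #SU.1 * ν (Ioc y x) ^ #SU.2 * ν (Ioi x) ^ #(SU.1 ∪ SU.2)ᶜ := by
  set pattern := fun ω => (lowSet ε y ω, lowSet ε x ω \ lowSet ε y ω)
  have hevent : {ω | r ≤ #(lowSet ε y ω) ∧ s ≤ #(lowSet ε x ω)} =
      pattern ⁻¹' (countPatterns n r s : Set _) := by
    ext ω
    have := Finset.card_sdiff_add_card_eq_card (lowSet_mono (ε := ε) hyx ω)
    simp only [mem_ofPred_eq, countPatterns, Finset.coe_filter, Finset.mem_univ, true_and,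
      preimage_ofPred_eq, Finset.disjoint_sdiff, pattern]
    omega
  have hdisj : ∀ SU ∈ countPatterns n r s, Disjoint SU.1 SU.2 := fun SU h => by
    simp only [countPatterns, Finset.mem_filter] at h
    exact h.2.1
  rw [hevent, ← sum_measure_preimage_singleton]
  · refine Finset.sum_congr rfl fun SU hSU => ?_
    rw [preimage_lowSet_pair_eq_iInter hyx (hdisj SU hSU),
      hindep.measure_iInter_preimage_eq_prod hmeas hdist (measurableSet_cell y x _ _),
      prod_measure_cell y x (hdisj SU hSU)]
  · intro SU hSU
    rw [preimage_lowSet_pair_eq_iInter hyx (hdisj SU hSU)]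
    exact MeasurableSet.iInter fun i => hmeas i (measurableSet_cell y x _ _ i)

theorem measureReal_card_lowSet_ge [IsProbabilityMeasure ν] (hindep : iIndepFun ε μ)
    (hmeas : ∀ i, Measurable (ε i)) (hdist : ∀ i, μ.map (ε i) = ν) {y x : ℝ} (hyx : y ≤ x)
    (r s : ℕ) :
    μ.real {ω | r ≤ #(lowSet ε y ω) ∧ s ≤ #(lowSet ε x ω)} =
      ν.real (Iic y) ^ r * countTailPoly n r s (ν.real (Iic x)) (ν.real (Iic y)) := by
  have hIoc : ν.real (Ioc y x) = ν.real (Iic x) - ν.real (Iic y) := by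
    rw [← Iic_sdiff_Iic, measureReal_sdiff (Iic_subset_Iic.2 hyx) measurableSet_Iic]
  have hIoi : ν.real (Ioi x) = 1 - ν.real (Iic x) := by
    rw [← compl_Iic, probReal_compl_eq_one_sub measurableSet_Iic]
  rw [measureReal_def, measure_card_lowSet_ge hindep hmeas hdist hyx,
    ENNReal.toReal_sum fun _ _ => by finiteness, countTailPoly, Finset.mul_sum]
  refine Finset.sum_congr rfl fun SU hSU => ?_
  have hr : r ≤ #SU.1 := by
    simp only [countPatterns, Finset.mem_filter] at hSU
    exact hSU.2.2.1
  simp only [ENNReal.toReal_mul, ENNReal.toReal_pow, ← measureReal_def, hIoc, hIoi]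
  rw [← Nat.add_sub_cancel' hr, pow_add, Nat.add_sub_cancel_left]
  ring

theorem measureReal_orderStat_div_eq [IsProbabilityMeasure ν] (hindep : iIndepFun ε μ)
    (hmeas : ∀ i, Measurable (ε i)) (hdist : ∀ i, μ.map (ε i) = ν) {r s : ℕ} (hr : 1 ≤ r)
    (hrs : r ≤ s) (hsn : s ≤ n) {y x : ℝ} (hyx : y ≤ x) (hy : 0 < ν.real (Iic y)) :
    μ.real {ω | orderStat (fun i => ε i ω) r ≤ y ∧ orderStat (fun i => ε i ω) s ≤ x} /
        μ.real {ω | orderStat (fun i => ε i ω) r ≤ y} =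
      countTailPoly n r s (ν.real (Iic x)) (ν.real (Iic y)) /
        countTailPoly n r r (ν.real (Iic x)) (ν.real (Iic y)) := by
  have hnum : {ω | orderStat (fun i => ε i ω) r ≤ y ∧ orderStat (fun i => ε i ω) s ≤ x} =
      {ω | r ≤ #(lowSet ε y ω) ∧ s ≤ #(lowSet ε x ω)} :=
    Set.ext fun ω => and_congr (orderStat_le_iff _ hr (by omega) y)
      (orderStat_le_iff _ (by omega) hsn x)
  have hden : {ω | orderStat (fun i => ε i ω) r ≤ y} =
      {ω | r ≤ #(lowSet ε y ω) ∧ r ≤ #(lowSet ε x ω)} :=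
    Set.ext fun ω => (orderStat_le_iff _ hr (by omega) y).trans
      ⟨fun h => ⟨h, h.trans (Finset.card_le_card (lowSet_mono hyx ω))⟩, And.left⟩
  rw [hnum, hden, measureReal_card_lowSet_ge hindep hmeas hdist hyx,
    measureReal_card_lowSet_ge hindep hmeas hdist hyx, mul_div_mul_left _ _ (pow_ne_zero r hy.ne')]

theorem measure_orderStat_le_eq_zero (hmeas : ∀ i, Measurable (ε i))
    (hdist : ∀ i, μ.map (ε i) = ν) {x : ℝ} (hx : ν (Iic x) = 0) {j : ℕ} (hj : 1 ≤ j)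
    (hjn : j ≤ n) :
    μ {ω | orderStat (fun i => ε i ω) j ≤ x} = 0 := by
  have hsub : {ω | orderStat (fun i => ε i ω) j ≤ x} ⊆ ⋃ i, ε i ⁻¹' Iic x := fun ω hω => by
    obtain ⟨i, hi⟩ := Finset.card_pos.mp (lt_of_lt_of_le hj ((orderStat_le_iff _ hj hjn x).mp hω))
    exact Set.mem_iUnion.mpr ⟨i, (Finset.mem_filter.mp hi).2⟩
  refine measure_mono_null hsub (measure_iUnion_null fun i => ?_)
  rwa [← Measure.map_apply (hmeas i) measurableSet_Iic, hdist i]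

end Pattern

lemma tendsto_countTailPoly_div {α : Type*} {l : Filter α} {p : α → ℝ} (hp : Tendsto p l (𝓝 0))
    {n r : ℕ} (hrn : r ≤ n) (s : ℕ) (F : ℝ) :
    Tendsto (fun a => countTailPoly n r s F (p a) / countTailPoly n r r F (p a)) l
      (𝓝 (binomialTail (n - r) (s - r) F)) := by
  have hC : (n.choose r : ℝ) ≠ 0 := by exact_mod_cast (Nat.choose_pos hrn).ne'
  have hlim := (((continuous_countTailPoly n r s F).tendsto 0).comp hp).div
    (((continuous_countTailPoly n r r F).tendsto 0).comp hp)
    (by rwa [countTailPoly_zero, Nat.sub_self, binomialTail_zero_eq_one, mul_one])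
  rwa [countTailPoly_zero, countTailPoly_zero, Nat.sub_self, binomialTail_zero_eq_one, mul_one,
    mul_div_cancel_left₀ _ hC] at hlim

lemma tendsto_measureReal_Iic_nhdsGT (ν : Measure ℝ) [IsProbabilityMeasure ν] (a : ℝ) :
    Tendsto (fun y => ν.real (Iic y)) (𝓝[>] a) (𝓝 (ν.real (Iic a))) := by
  simp_rw [← cdf_eq_real]
  exact ((cdf ν).right_continuous a).tendsto.mono_left (nhdsWithin_mono a Ioi_subset_Ici_self)

lemma measure_Iic_eq_zero_of_nonpos {ν : Measure ℝ} (hac : ν ≪ volume) (hsupp : ν (Iio 0) = 0)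
    {t : ℝ} (ht : t ≤ 0) : ν (Iic t) = 0 :=
  measure_mono_null (Iic_subset_Iic.2 ht)
    (Iio_union_right (a := (0 : ℝ)) ▸ measure_union_null hsupp (hac Real.volume_singleton))

theorem stmt11_general {Ω : Type*} [MeasurableSpace Ω] (μ : Measure Ω)
    (ν : Measure ℝ) [IsProbabilityMeasure ν] (hac : ν ≪ volume)
    (hsupp : ν (Set.Iio 0) = 0) (hinf : ∀ y : ℝ, 0 < y → 0 < ν (Set.Iic y))
    (n r s : ℕ) (hr : 1 ≤ r) (hrs : r < s) (hsn : s ≤ n)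
    (ε : Fin n → Ω → ℝ) (hmeas : ∀ i, Measurable (ε i))
    (hindep : iIndepFun ε μ)
    (hdist : ∀ i, Measure.map (ε i) μ = ν) :
    ∀ x : ℝ,
      Filter.Tendsto
        (fun y : ℝ =>
          (μ {ω | orderStat (fun i => ε i ω) r ≤ y ∧ orderStat (fun i => ε i ω) s ≤ x}).toReal
            / (μ {ω | orderStat (fun i => ε i ω) r ≤ y}).toReal)
        (nhdsWithin 0 (Set.Ioi 0))
        (nhds (∑ k ∈ Finset.Icc (s - r) (n - r), ((n - r).choose k : ℝ) *
          (ν (Set.Iic x)).toReal ^ k * (1 - (ν (Set.Iic x)).toReal) ^ (n - r - k))) := by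
  intro x
  change Tendsto _ _ (𝓝 (binomialTail (n - r) (s - r) (ν.real (Iic x))))
  rcases le_or_gt x 0 with hx | hx
  · have hFx := measure_Iic_eq_zero_of_nonpos hac hsupp hx
    have hnum : ∀ y, μ {ω | orderStat (fun i => ε i ω) r ≤ y ∧
        orderStat (fun i => ε i ω) s ≤ x} = 0 := fun y =>
      measure_mono_null (fun ω hω => hω.2)
        (measure_orderStat_le_eq_zero hmeas hdist hFx (by omega) hsn)
    simp only [hnum, ENNReal.toReal_zero, zero_div, measureReal_def, hFx,
      binomialTail_eq_zero_of_pos _ (Nat.sub_pos_of_lt hrs)]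
    exact tendsto_const_nhds
  have hp : Tendsto (fun y => ν.real (Iic y)) (𝓝[>] 0) (𝓝 0) := by
    simpa [measureReal_def, measure_Iic_eq_zero_of_nonpos hac hsupp le_rfl] using
      tendsto_measureReal_Iic_nhdsGT ν 0
  refine (tendsto_countTailPoly_div hp (by omega) s _).congr' ?_
  filter_upwards [Ioo_mem_nhdsGT hx] with y ⟨hy, hyx⟩
  exact (measureReal_orderStat_div_eq hindep hmeas hdist hr hrs.le hsn hyx.le
    (ENNReal.toReal_pos (hinf y hy).ne' (by finiteness))).symm

/-- For an absolutely continuous distribution supported on `[0,∞)` with `inf` of support `0`,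
the conditional c.d.f. of the `s`-th order statistic given `{ε₍ᵣ₎ ≤ y}` converges, as
`y ↓ 0`, to the c.d.f. of the `(s−r)`-th order statistic of a sample of size `n−r`. -/
theorem stmt11 {Ω : Type*} [MeasurableSpace Ω] (μ : Measure Ω) [IsProbabilityMeasure μ]
    (ν : Measure ℝ) [IsProbabilityMeasure ν] (hac : ν ≪ volume)
    (hsupp : ν (Set.Iio 0) = 0) (hinf : ∀ y : ℝ, 0 < y → 0 < ν (Set.Iic y))
    (n r s : ℕ) (hr : 1 ≤ r) (hrs : r < s) (hsn : s ≤ n)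
    (ε : Fin n → Ω → ℝ) (hmeas : ∀ i, Measurable (ε i))
    (hindep : iIndepFun ε μ)
    (hdist : ∀ i, Measure.map (ε i) μ = ν) :
    ∀ x : ℝ,
      Filter.Tendsto
        (fun y : ℝ =>
          (μ {ω | orderStat (fun i => ε i ω) r ≤ y ∧ orderStat (fun i => ε i ω) s ≤ x}).toReal
            / (μ {ω | orderStat (fun i => ε i ω) r ≤ y}).toReal)
        (nhdsWithin 0 (Set.Ioi 0))
        (nhds (∑ k ∈ Finset.Icc (s - r) (n - r), ((n - r).choose k : ℝ) *
          (ν (Set.Iic x)).toReal ^ k * (1 - (ν (Set.Iic x)).toReal) ^ (n - r - k))) :=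
  stmt11_general μ ν hac hsupp hinf n r s hr hrs hsn ε hmeas hindep hdist
end

section
/- Let G(x) = 1 − e^{−x}[1 + π^{−2}(1 − cos 2πx)] for x ≥ 0 and G(x) = 0 for x < 0. Then G is a cumulative distribution function: it is nondecreasing, right-continuous, G(0) = 0, and G(x) → 1 as x → ∞. -/
/-!
On `[0, ∞)` the function `G` is the restriction of the smooth function
`F x = 1 - e^{-x} (1 + π⁻² (1 - cos 2πx))`, whose derivative
`e^{-x} (1 + π⁻² (1 - cos 2πx) - (2/π) sin 2πx)` is at least `e^{-x} (1 - 2/π) > 0`.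
So `F` is strictly increasing with `F 0 = 0`, which makes `G = max F 0`; it tends to `1`
because `e^{-x}` kills the bounded oscillating factor.
-/

open Real Set Filter Topology

/-- Rossberg's counterexample distribution function. -/
noncomputable def rossbergG (x : ℝ) : ℝ :=
  if x < 0 then 0
  else 1 - Real.exp (-x) * (1 + (Real.pi ^ 2)⁻¹ * (1 - Real.cos (2 * Real.pi * x)))

noncomputable def rossbergF (x : ℝ) : ℝ :=
  1 - exp (-x) * (1 + (π ^ 2)⁻¹ * (1 - cos (2 * π * x)))

lemma rossbergF_zero : rossbergF 0 = 0 := by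
  simp [rossbergF]

lemma continuous_rossbergF : Continuous rossbergF := by
  unfold rossbergF
  fun_prop

lemma hasDerivAt_rossbergF (x : ℝ) :
    HasDerivAt rossbergF
      (exp (-x) * (1 + (π ^ 2)⁻¹ * (1 - cos (2 * π * x)) - 2 / π * sin (2 * π * x))) x := by
  have hexp : HasDerivAt (fun x : ℝ => exp (-x)) (-exp (-x)) x := by
    simpa using (hasDerivAt_neg x).exp
  have hcos : HasDerivAt (fun x : ℝ => cos (2 * π * x)) (-sin (2 * π * x) * (2 * π)) x := by
    simpa using ((hasDerivAt_id x).const_mul (2 * π)).cos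
  have hfactor := ((hcos.const_sub 1).const_mul (π ^ 2)⁻¹).const_add 1
  refine ((hexp.mul hfactor).const_sub 1).congr_deriv ?_
  field_simp
  ring

lemma rossberg_density_factor_pos (θ : ℝ) :
    0 < 1 + (π ^ 2)⁻¹ * (1 - cos θ) - 2 / π * sin θ := by
  have h2π : 2 / π < 1 := (div_lt_one pi_pos).2 (by linarith [pi_gt_three])
  have hcos : 0 ≤ (π ^ 2)⁻¹ * (1 - cos θ) :=
    mul_nonneg (by positivity) (sub_nonneg.2 (cos_le_one θ))
  have hsin : 2 / π * sin θ ≤ 2 / π :=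
    mul_le_of_le_one_right (by positivity) (sin_le_one θ)
  linarith

lemma strictMono_rossbergF : StrictMono rossbergF :=
  strictMono_of_hasDerivAt_pos hasDerivAt_rossbergF fun _ =>
    mul_pos (exp_pos _) (rossberg_density_factor_pos _)

lemma rossbergG_eq_max (x : ℝ) : rossbergG x = max (rossbergF x) 0 := by
  rw [rossbergG]
  split_ifs with hx
  · have : rossbergF x < 0 := rossbergF_zero ▸ strictMono_rossbergF hx
    exact (max_eq_right this.le).symm
  · have : 0 ≤ rossbergF x := rossbergF_zero ▸ strictMono_rossbergF.monotone (not_lt.1 hx)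
    exact (max_eq_left this).symm

lemma tendsto_exp_neg_mul_of_abs_le {g : ℝ → ℝ} {C : ℝ} (hg : ∀ x, |g x| ≤ C) :
    Tendsto (fun x => exp (-x) * g x) atTop (𝓝 0) :=
  tendsto_exp_neg_atTop_nhds_zero.zero_mul_isBoundedUnder_le
    ⟨C, eventually_map.2 (Eventually.of_forall hg)⟩

lemma tendsto_rossbergF_atTop : Tendsto rossbergF atTop (𝓝 1) := by
  unfold rossbergF
  have hbound (x : ℝ) : |1 + (π ^ 2)⁻¹ * (1 - cos (2 * π * x))| ≤ 1 + (π ^ 2)⁻¹ * 2 := by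
    have hπ : 0 < (π ^ 2)⁻¹ := by positivity
    rw [abs_le]
    constructor <;> nlinarith [cos_le_one (2 * π * x), neg_one_le_cos (2 * π * x)]
  simpa using (tendsto_exp_neg_mul_of_abs_le hbound).const_sub 1

/-- `rossbergG` is a cumulative distribution function: nondecreasing, right-continuous,
`G(0) = 0`, and `G(x) → 1` as `x → ∞`. -/
theorem stmt15 :
    Monotone rossbergG ∧
    (∀ x : ℝ, ContinuousWithinAt rossbergG (Set.Ici x) x) ∧
    rossbergG 0 = 0 ∧
    Filter.Tendsto rossbergG Filter.atTop (nhds 1) := by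
  have hG : rossbergG = fun x => max (rossbergF x) 0 := funext rossbergG_eq_max
  refine ⟨?_, fun x => ?_, by simp [rossbergG], ?_⟩
  · rw [hG]
    exact strictMono_rossbergF.monotone.max monotone_const
  · rw [hG]
    exact (continuous_rossbergF.max continuous_const).continuousWithinAt
  · rw [hG]
    simpa using tendsto_rossbergF_atTop.max (tendsto_const_nhds (x := (0 : ℝ)))
end
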